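/- Let R be a ring of characteristic p > 0 with an iterative derivation δ, and let R₁ = {a ∈ R : δ^(1)(a) = 0} be the constants of the derivation δ^(1). Then δ^(p) maps R₁ into itself, and the restriction of δ^(p) to R₁ is a derivation on R₁. -/

import Mathlib

/-- An iterative derivation on a unital ring `R`: a sequence of additive maps
`d n : R → R` with `d 0 = id`, the Leibniz rule
`d n (a*b) = ∑_{i+j=n} d i a * d j b`, and iterativity
`d n ∘ d m = (m+n choose n) • d (m+n)`. -/
structure IterDeriv (R : Type*) [Ring R] where
  d : ℕ → R → R
  map_add : ∀ n a b, d n (a + b) = d n a + d n b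
  map_id : ∀ a, d 0 a = a
  leibniz : ∀ n a b, d n (a * b) = ∑ ij ∈ Finset.HasAntidiagonal.antidiagonal n, d ij.1 a * d ij.2 b
  iter : ∀ m n a, d n (d m a) = (m + n).choose n • d (m + n) a

/-!
Iterativity gives `δ⁽¹⁾ ∘ δ⁽ⁿ⁾ = (n + 1) • δ⁽ⁿ⁺¹⁾ = δ⁽ⁿ⁾ ∘ δ⁽¹⁾`, so `δ⁽ᵖ⁾` commutes with `δ⁽¹⁾`
and preserves its constants. For a constant `a`, the same identity and the invertibility of
`2, …, p - 1` in characteristic `p` give `δ⁽ⁱ⁾ a = 0` for `0 < i < p`; in the Leibniz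
expansion of `δ⁽ᵖ⁾ (a * b)` only the terms with `i = 0` and `i = p` survive.
-/

namespace IterDeriv

variable {R : Type*} [Ring R] (D : IterDeriv R)

theorem map_zero (n : ℕ) : D.d n 0 = 0 := by
  simpa using D.map_add n 0 0

theorem d_comm (m n : ℕ) (a : R) : D.d n (D.d m a) = D.d m (D.d n a) := by
  rw [D.iter, D.iter, Nat.add_comm n m, Nat.choose_symm_add]

theorem d_one_d (n : ℕ) (a : R) : D.d 1 (D.d n a) = (n + 1) • D.d (n + 1) a := by
  rw [D.iter, Nat.choose_one_right]

theorem d_one_d_eq_zero {a : R} (ha : D.d 1 a = 0) (n : ℕ) : D.d 1 (D.d n a) = 0 := by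
  rw [D.d_comm, ha, D.map_zero]

theorem map_mul_of_d_eq_zero {n : ℕ} (hn : 0 < n) {a : R}
    (ha : ∀ i, 0 < i → i < n → D.d i a = 0) (b : R) :
    D.d n (a * b) = D.d n a * b + a * D.d n b := by
  obtain ⟨k, rfl⟩ := Nat.exists_eq_succ_of_ne_zero hn.ne'
  have hmiddle : ∑ i ∈ Finset.range k, D.d (i + 1) a * D.d (k + 1 - (i + 1)) b = 0 :=
    Finset.sum_eq_zero fun i hi => by
      rw [ha (i + 1) i.succ_pos (by have := Finset.mem_range.mp hi; omega), zero_mul]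
  rw [D.leibniz, Finset.Nat.sum_antidiagonal_eq_sum_range_succ (fun i j => D.d i a * D.d j b),
    Finset.sum_range_succ, Finset.sum_range_succ', hmiddle]
  simp [D.map_id, add_comm]

theorem d_eq_zero_of_lt_charP {p : ℕ} (hp : p.Prime) [CharP R p] {a : R} (ha : D.d 1 a = 0)
    {i : ℕ} (hi₀ : 0 < i) (hip : i < p) : D.d i a = 0 := by
  induction i with
  | zero => exact absurd hi₀ (lt_irrefl 0)
  | succ n ih =>
    rcases Nat.eq_zero_or_pos n with rfl | hn
    · exact ha
    have hunit : IsUnit ((n + 1 : ℕ) : R) :=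
      (CharP.isUnit_natCast_iff hp).mpr (Nat.not_dvd_of_pos_of_lt n.succ_pos hip)
    have hsmul : (n + 1) • D.d (n + 1) a = 0 := by
      rw [← D.d_one_d, ih hn (by omega), D.map_zero]
    rwa [nsmul_eq_mul, hunit.mul_right_eq_zero] at hsmul

end IterDeriv

/-- In characteristic `p > 0`, `δ⁽ᵖ⁾` maps the constants `R₁` of `δ⁽¹⁾` into
themselves and restricts to a derivation on `R₁`. -/
theorem d_p_is_derivation_on_first_constants (R : Type*) [Ring R] (p : ℕ)
    (hp : p.Prime) [CharP R p] (D : IterDeriv R) :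
    (∀ a : R, D.d 1 a = 0 → D.d 1 (D.d p a) = 0) ∧
    (∀ a b : R, D.d 1 a = 0 → D.d 1 b = 0 →
      D.d p (a * b) = D.d p a * b + a * D.d p b) :=
  ⟨fun _ ha => D.d_one_d_eq_zero ha p,
    fun _ b ha _ => D.map_mul_of_d_eq_zero hp.pos
      (fun _ hi₀ hip => D.d_eq_zero_of_lt_charP hp ha hi₀ hip) b⟩
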